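/- Let M_1, …, M_m : ℝ^n → ℝ^n be paracontractions with respect to a norm ‖·‖ on ℝ^n sharing at least one common fixed point, and let M be the stacked map M(x_1, …, x_m) = (M_1(x_1), …, M_m(x_m)). Let S(1), …, S(q) be m × m stochastic matrices such that the graph γ(S(q)S(q−1)⋯S(1)) of the product is strongly connected. Then the fixed-point set of the composed map (S(q) ⊗ I) ∘ M ∘ (S(q−1) ⊗ I) ∘ M ∘ ⋯ ∘ (S(1) ⊗ I) ∘ M equals F(M) ∩ C; that is, it consists exactly of the stacked vectors (y, y, …, y) where y is a common fixed point of M_1, …, M_m. -/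

import Mathlib

open Filter Topology Finset
open scoped ENNReal

def IsNormOn {E : Type*} [AddCommGroup E] [Module ℝ E] (N : E → ℝ) : Prop :=
  (∀ x, N x = 0 ↔ x = 0) ∧
  (∀ (c : ℝ) (x : E), N (c • x) = |c| * N x) ∧
  (∀ x y : E, N (x + y) ≤ N x + N y)

def IsParacontraction {E : Type*} [AddCommGroup E] [Module ℝ E] [TopologicalSpace E]
    (N : E → ℝ) (P : E → E) : Prop :=
  Continuous P ∧ ∀ x y : E, P x ≠ x → P y = y → N (P x - y) < N (x - y)

def QuasiNonexpansive {E : Type*} [AddCommGroup E] (N : E → ℝ) (P : E → E) : Prop :=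
  ∀ x y : E, P y = y → N (P x - y) ≤ N (x - y)

noncomputable def pnorm {n : ℕ} (p : ℝ) (x : Fin n → ℝ) : ℝ :=
  (∑ i, |x i| ^ p) ^ (1 / p)

noncomputable def pnormE {n : ℕ} (p : ℝ≥0∞) (x : Fin n → ℝ) : ℝ :=
  if p = ⊤ then ⨆ i, |x i| else (∑ i, |x i| ^ p.toReal) ^ (1 / p.toReal)

noncomputable def mixed22 {m n : ℕ} (x : Fin m → Fin n → ℝ) : ℝ :=
  pnorm 2 (fun i => pnorm 2 (x i))

noncomputable def mixedPInf {m n : ℕ} (p : ℝ) (x : Fin m → Fin n → ℝ) : ℝ :=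
  ⨆ i, pnorm p (x i)

noncomputable def mixedEInf {m n : ℕ} (p : ℝ≥0∞) (x : Fin m → Fin n → ℝ) : ℝ :=
  ⨆ i, pnormE p (x i)

def IsStochastic {m : ℕ} (S : Matrix (Fin m) (Fin m) ℝ) : Prop :=
  (∀ i j, 0 ≤ S i j) ∧ ∀ i, ∑ j, S i j = 1

def IsDoublyStochastic {m : ℕ} (S : Matrix (Fin m) (Fin m) ℝ) : Prop :=
  IsStochastic S ∧ ∀ j, ∑ i, S i j = 1

def kron {m n : ℕ} (S : Matrix (Fin m) (Fin m) ℝ) (x : Fin m → Fin n → ℝ) :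
    Fin m → Fin n → ℝ :=
  fun i => ∑ j, S i j • x j

def stackMap {m n : ℕ} (M : Fin m → (Fin n → ℝ) → (Fin n → ℝ)) :
    (Fin m → Fin n → ℝ) → (Fin m → Fin n → ℝ) :=
  fun x i => M i (x i)

def consensusSet (m n : ℕ) : Set (Fin m → Fin n → ℝ) :=
  {x | ∀ i j : Fin m, x i = x j}

def StronglyConnected {V : Type*} (G : V → V → Prop) : Prop :=
  ∀ i j : V, Relation.ReflTransGen G i j

def graphComp {V : Type*} (Gq Gp : V → V → Prop) : V → V → Prop :=
  fun i j => ∃ k, Gp i k ∧ Gq k j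

def composeChain {m : ℕ} (G : ℕ → Fin m → Fin m → Prop) (a : ℕ) :
    ℕ → (Fin m → Fin m → Prop)
  | 0 => G a
  | k + 1 => graphComp (G (a + (k + 1))) (composeChain G a k)

def mapChain {α : Type*} (F : ℕ → α → α) : ℕ → α → α
  | 0 => id
  | k + 1 => F (k + 1) ∘ mapChain F k

noncomputable def Phi {m : ℕ} (S : ℕ → Matrix (Fin m) (Fin m) ℝ) (τ t : ℕ) :
    Matrix (Fin m) (Fin m) ℝ :=
  (List.range (t - τ)).foldl (fun A k => S (τ + k + 1) * A) 1


/-!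
Fix a common fixed point `y` and follow the distances `vₜ(i) = N(zₜ(i) - y)` along the
trajectory `zₜ` of `x`. Convexity of the norm and paracontractivity give
`vₜ₊₁ ≤ S(t+1) vₜ`, hence `v_q ≤ Φ vₜ` with `Φ = S(q)⋯S(t+1)`. If `x` is fixed then
`v₀ ≤ Φ v₀` for the stochastic matrix `Φ = S(q)⋯S(1)`, whose graph is strongly connected, so
by the maximum principle `v₀` is a constant `c` and all `vₜ ≤ c`. Equality in `c = v_q ≤ Φ vₜ`
then leaves no room for a strict decrease: every agent whose state reaches the final one sits at a
fixed point of its map. Hence `x = (Φ ⊗ I) x`, and the maximum principle, applied to each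
coordinate, yields consensus.
-/

open Matrix

section Norms

variable {E : Type*} [AddCommGroup E] [Module ℝ E]

theorem IsNormOn.sum_smul_le {N : E → ℝ} (hN : IsNormOn N) {ι : Type*} (s : Finset ι)
    (c : ι → ℝ) (w : ι → E) (hc : ∀ j ∈ s, 0 ≤ c j) :
    N (∑ j ∈ s, c j • w j) ≤ ∑ j ∈ s, c j * N (w j) := by
  classical
  induction s using Finset.induction_on with
  | empty => simp [(hN.1 0).2 rfl]
  | insert a s ha ih =>
    rw [sum_insert ha, sum_insert ha]
    calc N (c a • w a + ∑ j ∈ s, c j • w j) ≤ N (c a • w a) + N (∑ j ∈ s, c j • w j) :=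
          hN.2.2 _ _
      _ ≤ c a * N (w a) + ∑ j ∈ s, c j * N (w j) := by
        rw [hN.2.1, abs_of_nonneg (hc a (mem_insert_self a s))]
        gcongr
        exact ih fun j hj => hc j (mem_insert_of_mem hj)

theorem IsParacontraction.quasiNonexpansive [TopologicalSpace E] {N : E → ℝ} {P : E → E}
    (hP : IsParacontraction N P) : QuasiNonexpansive N P := by
  intro x y hy
  by_cases hx : P x = x
  · rw [hx]
  · exact (hP.2 x y hx hy).le

end Norms

section Stochastic

variable {ι : Type*} [Fintype ι] [DecidableEq ι] {A : Matrix ι ι ℝ}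

theorem isStochastic_iff_mem_rowStochastic {m : ℕ} {S : Matrix (Fin m) (Fin m) ℝ} :
    IsStochastic S ↔ S ∈ rowStochastic ℝ (Fin m) :=
  mem_rowStochastic_iff_sum.symm

theorem mulVec_mono_of_mem_rowStochastic (hA : A ∈ rowStochastic ℝ ι) {v w : ι → ℝ}
    (h : v ≤ w) : A *ᵥ v ≤ A *ᵥ w := fun i =>
  sum_le_sum fun j _ => mul_le_mul_of_nonneg_left (h j) (hA.1 i j)

theorem mulVec_const_of_mem_rowStochastic (hA : A ∈ rowStochastic ℝ ι) (c : ℝ) :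
    A *ᵥ (fun _ => c) = fun _ => c := by
  funext i
  simp [mulVec, dotProduct, ← sum_mul, sum_row_of_mem_rowStochastic hA]

theorem eq_of_le_of_le_mulVec (hA : A ∈ rowStochastic ℝ ι) {w : ι → ℝ} {c : ℝ}
    (hw : ∀ k, w k ≤ c) {i j : ι} (hi : c ≤ (A *ᵥ w) i) (hij : A i j ≠ 0) : w j = c := by
  have hgap : ∑ k, A i k * (c - w k) = c - (A *ᵥ w) i := by
    simp [mulVec, dotProduct, mul_sub, sum_sub_distrib, ← sum_mul,
      sum_row_of_mem_rowStochastic hA]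
  have hterm := (sum_eq_zero_iff_of_nonneg fun k _ =>
    mul_nonneg (hA.1 i k) (sub_nonneg.2 (hw k))).1
      (le_antisymm (by linarith) (sum_nonneg fun k _ =>
        mul_nonneg (hA.1 i k) (sub_nonneg.2 (hw k)))) j (mem_univ j)
  rcases mul_eq_zero.1 hterm with h | h
  · exact absurd h hij
  · linarith

theorem eq_of_le_mulVec_of_stronglyConnected (hA : A ∈ rowStochastic ℝ ι)
    (hconn : StronglyConnected fun i j => A j i ≠ 0) {w : ι → ℝ} (hw : w ≤ A *ᵥ w) (a b : ι) :
    w a = w b := by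
  obtain ⟨i₀, -, hmax⟩ := exists_max_image univ w ⟨a, mem_univ a⟩
  have hall : ∀ p, w p = w i₀ := fun p => by
    induction hconn p i₀ using Relation.ReflTransGen.head_induction_on with
    | refl => rfl
    | head hpr _ ih =>
      exact eq_of_le_of_le_mulVec hA (fun k => hmax k (mem_univ k)) (ih ▸ hw _) hpr
  rw [hall a, hall b]

theorem exists_ne_zero_of_stronglyConnected (hA : A ∈ rowStochastic ℝ ι)
    (hconn : StronglyConnected fun i j => A j i ≠ 0) (j : ι) : ∃ i, A i j ≠ 0 := by
  obtain ⟨b, hb⟩ : ∃ b, A j b ≠ 0 := by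
    by_contra! h
    simpa [h] using sum_row_of_mem_rowStochastic hA j
  rcases (hconn j b).cases_head with rfl | ⟨i, hi, -⟩
  · exact ⟨j, hb⟩
  · exact ⟨i, hi⟩

end Stochastic

section Products

variable {m : ℕ}

theorem List.foldl_mul_right_const {α : Type*} [Monoid α] (g : ℕ → α) (l : List ℕ) (B C : α) :
    l.foldl (fun A k => g k * A) (B * C) = l.foldl (fun A k => g k * A) B * C := by
  induction l generalizing B with
  | nil => rfl
  | cons a l ih => simp only [List.foldl_cons, ← mul_assoc, ih]

theorem Phi_self (S : ℕ → Matrix (Fin m) (Fin m) ℝ) (t : ℕ) : Phi S t t = 1 := by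
  simp [Phi]

theorem Phi_eq_Phi_succ_mul (S : ℕ → Matrix (Fin m) (Fin m) ℝ) {t q : ℕ} (h : t < q) :
    Phi S t q = Phi S (t + 1) q * S (t + 1) := by
  rw [Phi, Phi, show q - t = q - (t + 1) + 1 by omega, List.range_succ_eq_map, List.foldl_cons,
    List.foldl_map, mul_one, show S (t + 0 + 1) = 1 * S (t + 1) by simp,
    List.foldl_mul_right_const, one_mul]
  congr 2
  funext A k
  rw [show t + (k + 1) + 1 = t + 1 + k + 1 by omega]

theorem Phi_mem {P : Submonoid (Matrix (Fin m) (Fin m) ℝ)} {S : ℕ → Matrix (Fin m) (Fin m) ℝ}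
    {τ q : ℕ} (hS : ∀ t, τ < t → t ≤ q → S t ∈ P) : Phi S τ q ∈ P := by
  suffices ∀ (l : List ℕ) (B : Matrix (Fin m) (Fin m) ℝ), B ∈ P → (∀ k ∈ l, S (τ + k + 1) ∈ P) →
      l.foldl (fun A k => S (τ + k + 1) * A) B ∈ P from
    this _ _ P.one_mem fun k hk => hS _ (by omega) (by rw [List.mem_range] at hk; omega)
  intro l
  induction l with
  | nil => exact fun B hB _ => hB
  | cons k l ih =>
    exact fun B hB hl => ih _ (P.mul_mem (hl k (by simp)) hB) fun k' hk' => hl k' (by simp [hk'])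

theorem le_Phi_mulVec {S : ℕ → Matrix (Fin m) (Fin m) ℝ} {q : ℕ}
    (hS : ∀ t, 1 ≤ t → t ≤ q → S t ∈ rowStochastic ℝ (Fin m)) {v : ℕ → Fin m → ℝ}
    (hv : ∀ t < q, v (t + 1) ≤ S (t + 1) *ᵥ v t) {t : ℕ} (ht : t ≤ q) :
    v q ≤ Phi S t q *ᵥ v t := by
  induction ht using Nat.decreasingInduction with
  | self => simp [Phi_self]
  | of_succ t htq ih =>
    calc v q ≤ Phi S (t + 1) q *ᵥ v (t + 1) := ih
      _ ≤ Phi S (t + 1) q *ᵥ (S (t + 1) *ᵥ v t) :=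
        mulVec_mono_of_mem_rowStochastic (Phi_mem fun s h1 h2 => hS s (by omega) h2) (hv t htq)
      _ = Phi S t q *ᵥ v t := by rw [mulVec_mulVec, ← Phi_eq_Phi_succ_mul S htq]

end Products

section Kron

variable {m n : ℕ}

theorem kron_one (x : Fin m → Fin n → ℝ) : kron 1 x = x := by
  funext i
  simp [kron, Matrix.one_apply]

theorem kron_mul (A B : Matrix (Fin m) (Fin m) ℝ) (x : Fin m → Fin n → ℝ) :
    kron (A * B) x = kron A (kron B x) := by
  funext i
  simp only [kron, smul_sum, mul_apply, sum_smul, smul_smul]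
  rw [sum_comm]

theorem kron_apply_apply (A : Matrix (Fin m) (Fin m) ℝ) (x : Fin m → Fin n → ℝ) (i : Fin m)
    (k : Fin n) : kron A x i k = (A *ᵥ fun j => x j k) i := by
  simp [kron, mulVec, dotProduct, Finset.sum_apply]

theorem kron_congr {A : Matrix (Fin m) (Fin m) ℝ} {x x' : Fin m → Fin n → ℝ}
    (h : ∀ i j, A i j ≠ 0 → x j = x' j) : kron A x = kron A x' := by
  funext i
  refine sum_congr rfl fun j _ => ?_
  by_cases hij : A i j = 0
  · simp [hij]
  · rw [h i j hij]

theorem kron_eq_self_of_mem_consensusSet {A : Matrix (Fin m) (Fin m) ℝ}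
    (hA : A ∈ rowStochastic ℝ (Fin m)) {x : Fin m → Fin n → ℝ} (hx : x ∈ consensusSet m n) :
    kron A x = x := by
  funext i
  calc kron A x i = ∑ j, A i j • x i := sum_congr rfl fun j _ => by rw [hx j i]
    _ = x i := by rw [← sum_smul, sum_row_of_mem_rowStochastic hA, one_smul]

theorem IsNormOn.kron_sub_le {N : (Fin n → ℝ) → ℝ} (hN : IsNormOn N)
    {A : Matrix (Fin m) (Fin m) ℝ} (hA : A ∈ rowStochastic ℝ (Fin m)) (w : Fin m → Fin n → ℝ)
    (y : Fin n → ℝ) : (fun i => N (kron A w i - y)) ≤ A *ᵥ fun j => N (w j - y) := by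
  intro i
  have hsub : kron A w i - y = ∑ j, A i j • (w j - y) := by
    simp [kron, smul_sub, sum_sub_distrib, ← sum_smul, sum_row_of_mem_rowStochastic hA]
  show N (kron A w i - y) ≤ _
  rw [hsub]
  exact hN.sum_smul_le _ _ _ fun j _ => hA.1 i j

end Kron

theorem mapChain_eq_self {α : Type*} {F : ℕ → α → α} {x : α} {q : ℕ}
    (h : ∀ t, 1 ≤ t → t ≤ q → F t x = x) : mapChain F q x = x := by
  induction q with
  | zero => rfl
  | succ q ih =>
    simp only [mapChain, Function.comp_apply]
    rw [ih fun t h1 h2 => h t h1 (by omega), h (q + 1) (by omega) le_rfl]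

def trajectory {m n : ℕ} (M : Fin m → (Fin n → ℝ) → Fin n → ℝ) (S : ℕ → Matrix (Fin m) (Fin m) ℝ)
    (x : Fin m → Fin n → ℝ) (t : ℕ) : Fin m → Fin n → ℝ :=
  mapChain (fun t => kron (S t) ∘ stackMap M) t x

section Trajectory

variable {m n : ℕ} {N : (Fin n → ℝ) → ℝ} {M : Fin m → (Fin n → ℝ) → Fin n → ℝ}
  {S : ℕ → Matrix (Fin m) (Fin m) ℝ} {q : ℕ} {x : Fin m → Fin n → ℝ} {y : Fin n → ℝ}

theorem trajectory_succ (t : ℕ) :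
    trajectory M S x (t + 1) = kron (S (t + 1)) (stackMap M (trajectory M S x t)) :=
  rfl

theorem dist_stackMap_le (hM : ∀ j, IsParacontraction N (M j)) (hy : ∀ j, M j y = y)
    (w : Fin m → Fin n → ℝ) : (fun j => N (stackMap M w j - y)) ≤ fun j => N (w j - y) :=
  fun j => (hM j).quasiNonexpansive _ _ (hy j)

theorem dist_trajectory_le_Phi_mulVec (hN : IsNormOn N)
    (hM : ∀ j, IsParacontraction N (M j)) (hy : ∀ j, M j y = y)
    (hS : ∀ t, 1 ≤ t → t ≤ q → S t ∈ rowStochastic ℝ (Fin m)) {t : ℕ} (ht : t ≤ q) :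
    (fun i => N (trajectory M S x q i - y)) ≤
      Phi S t q *ᵥ fun j => N (trajectory M S x t j - y) :=
  le_Phi_mulVec (v := fun t j => N (trajectory M S x t j - y)) hS
    (fun s hs => (hN.kron_sub_le (hS _ (by omega) hs) _ y).trans
      (mulVec_mono_of_mem_rowStochastic (hS _ (by omega) hs) (dist_stackMap_le hM hy _))) ht

theorem dist_trajectory_le_Phi_mulVec_dist_stackMap (hN : IsNormOn N)
    (hM : ∀ j, IsParacontraction N (M j)) (hy : ∀ j, M j y = y)
    (hS : ∀ t, 1 ≤ t → t ≤ q → S t ∈ rowStochastic ℝ (Fin m)) {t : ℕ} (ht : t < q) :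
    (fun i => N (trajectory M S x q i - y)) ≤
      Phi S t q *ᵥ fun j => N (stackMap M (trajectory M S x t) j - y) :=
  calc (fun i => N (trajectory M S x q i - y))
      _ ≤ Phi S (t + 1) q *ᵥ fun j => N (trajectory M S x (t + 1) j - y) :=
        dist_trajectory_le_Phi_mulVec hN hM hy hS ht
      _ ≤ Phi S (t + 1) q *ᵥ S (t + 1) *ᵥ fun j => N (stackMap M (trajectory M S x t) j - y) :=
        mulVec_mono_of_mem_rowStochastic (Phi_mem fun s h1 h2 => hS s (by omega) h2)
          (hN.kron_sub_le (hS _ (by omega) ht) _ y)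
      _ = _ := by rw [mulVec_mulVec, ← Phi_eq_Phi_succ_mul S ht]

theorem dist_eq_of_trajectory_eq (hN : IsNormOn N) (hM : ∀ j, IsParacontraction N (M j))
    (hy : ∀ j, M j y = y) (hS : ∀ t, 1 ≤ t → t ≤ q → S t ∈ rowStochastic ℝ (Fin m))
    (hconn : StronglyConnected fun i j => Phi S 0 q j i ≠ 0) (hx : trajectory M S x q = x)
    (a b : Fin m) : N (x a - y) = N (x b - y) := by
  have h := dist_trajectory_le_Phi_mulVec hN hM hy hS (x := x) (Nat.zero_le q)
  rw [hx] at h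
  exact eq_of_le_mulVec_of_stronglyConnected (Phi_mem hS) hconn h a b

theorem dist_trajectory_le_of_dist_eq (hN : IsNormOn N) (hM : ∀ j, IsParacontraction N (M j))
    (hy : ∀ j, M j y = y) (hS : ∀ t, 1 ≤ t → t ≤ q → S t ∈ rowStochastic ℝ (Fin m)) {c : ℝ}
    (hc : ∀ j, N (x j - y) = c) {t : ℕ} (ht : t ≤ q) (j : Fin m) :
    N (trajectory M S x t j - y) ≤ c := by
  have hSt : ∀ s, 1 ≤ s → s ≤ t → S s ∈ rowStochastic ℝ (Fin m) :=
    fun s h1 h2 => hS s h1 (h2.trans ht)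
  have h := dist_trajectory_le_Phi_mulVec hN hM hy hSt (x := x) (Nat.zero_le t) j
  have hconst : (fun j => N (trajectory M S x 0 j - y)) = fun _ => c := funext hc
  rwa [hconst, mulVec_const_of_mem_rowStochastic (Phi_mem hSt)] at h

theorem map_trajectory_eq_of_Phi_ne_zero (hN : IsNormOn N) (hM : ∀ j, IsParacontraction N (M j))
    (hy : ∀ j, M j y = y) (hS : ∀ t, 1 ≤ t → t ≤ q → S t ∈ rowStochastic ℝ (Fin m))
    (hconn : StronglyConnected fun i j => Phi S 0 q j i ≠ 0) (hx : trajectory M S x q = x)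
    {t : ℕ} (ht : t < q) (i j : Fin m) (hij : Phi S t q i j ≠ 0) :
    M j (trajectory M S x t j) = trajectory M S x t j := by
  set c := N (x i - y)
  have hv := dist_trajectory_le_of_dist_eq hN hM hy hS
    (fun k => dist_eq_of_trajectory_eq hN hM hy hS hconn hx k i) ht.le
  have hu : ∀ k, N (stackMap M (trajectory M S x t) k - y) ≤ c :=
    fun k => (dist_stackMap_le hM hy _ k).trans (hv k)
  have hi : c ≤ (Phi S t q *ᵥ fun k => N (stackMap M (trajectory M S x t) k - y)) i := by
    simpa [hx] using dist_trajectory_le_Phi_mulVec_dist_stackMap hN hM hy hS (x := x) ht i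
  have hj := eq_of_le_of_le_mulVec (Phi_mem fun s h1 h2 => hS s (by omega) h2) hu hi hij
  by_contra hne
  exact (lt_of_lt_of_le ((hM j).2 _ y hne (hy j)) (hv j)).ne hj

theorem kron_Phi_trajectory_eq
    (hfix : ∀ t < q, ∀ i j, Phi S t q i j ≠ 0 → M j (trajectory M S x t j) = trajectory M S x t j)
    {t : ℕ} (ht : t ≤ q) : kron (Phi S t q) (trajectory M S x t) = trajectory M S x q := by
  induction ht using Nat.decreasingInduction with
  | self => rw [Phi_self, kron_one]
  | of_succ t htq ih =>
    rw [← ih, trajectory_succ, ← kron_mul, ← Phi_eq_Phi_succ_mul S htq]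
    exact kron_congr fun i j hij => (hfix t htq i j hij).symm

end Trajectory

theorem stmt19 {n m : ℕ} (N : (Fin n → ℝ) → ℝ) (hN : IsNormOn N)
    (M : Fin m → (Fin n → ℝ) → (Fin n → ℝ))
    (hpc : ∀ i, IsParacontraction N (M i))
    (hcommon : ∃ y : Fin n → ℝ, ∀ i, M i y = y)
    (q : ℕ) (hq : 1 ≤ q) (S : ℕ → Matrix (Fin m) (Fin m) ℝ)
    (hS : ∀ t, 1 ≤ t → t ≤ q → IsStochastic (S t))
    (hconn : StronglyConnected (fun i j : Fin m => Phi S 0 q j i ≠ 0)) :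
    {x : Fin m → Fin n → ℝ | mapChain (fun t => kron (S t) ∘ stackMap M) q x = x}
      = {x : Fin m → Fin n → ℝ | ∃ y, (∀ i, x i = y) ∧ ∀ i, M i y = y} := by
  obtain ⟨y, hy⟩ := hcommon
  replace hS : ∀ t, 1 ≤ t → t ≤ q → S t ∈ rowStochastic ℝ (Fin m) :=
    fun t h1 h2 => isStochastic_iff_mem_rowStochastic.1 (hS t h1 h2)
  have hΦ : Phi S 0 q ∈ rowStochastic ℝ (Fin m) := Phi_mem hS
  ext x
  constructor
  · intro (hx : trajectory M S x q = x)
    have hfix := fun t (ht : t < q) => map_trajectory_eq_of_Phi_ne_zero hN hpc hy hS hconn hx ht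
    have hxΦ : kron (Phi S 0 q) x = x := (kron_Phi_trajectory_eq hfix (Nat.zero_le q)).trans hx
    have hcons (a b : Fin m) : x a = x b := funext fun k =>
      eq_of_le_mulVec_of_stronglyConnected hΦ hconn
        (fun i => by rw [← kron_apply_apply, hxΦ]) a b
    have hMx (j : Fin m) : M j (x j) = x j :=
      let ⟨i, hij⟩ := exists_ne_zero_of_stronglyConnected hΦ hconn j
      hfix 0 hq i j hij
    rcases isEmpty_or_nonempty (Fin m) with _ | ⟨⟨i₀⟩⟩
    · exact ⟨y, isEmptyElim, isEmptyElim⟩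
    · exact ⟨x i₀, fun i => hcons i i₀, fun i => hcons i i₀ ▸ hMx i⟩
  · rintro ⟨z, hxz, hMz⟩
    have hMx : stackMap M x = x := funext fun i => by rw [stackMap, hxz i, hMz i]
    refine mapChain_eq_self fun t h1 h2 => ?_
    rw [Function.comp_apply, hMx]
    exact kron_eq_self_of_mem_consensusSet (hS t h1 h2) fun i j => by rw [hxz i, hxz j]
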